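/- Let f : ℝ → ℝ be strictly convex on [0, ∞) with f(0) finite. Define g : (0, 1] → ℝ by g(y) = y · f(1/y) + (1 − y) · f(0). Then g is strictly antitone on (0, 1]: for all y₁, y₂ with 0 < y₁ < y₂ ≤ 1, g(y₂) < g(y₁). -/

import Mathlib

/-- **Strict monotonicity lemma.** If `f : ℝ → ℝ` is strictly convex on `[0, ∞)`, then
`g(y) = y · f(1/y) + (1 − y) · f 0` is strictly antitone on `(0, 1]`: for all
`0 < y₁ < y₂ ≤ 1`, `g y₂ < g y₁`. -/
theorem dirac_f_divergence_strict_antitone (f : ℝ → ℝ)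
    (hf : StrictConvexOn ℝ (Set.Ici (0 : ℝ)) f)
    (y₁ y₂ : ℝ) (h0 : 0 < y₁) (h12 : y₁ < y₂) (h21 : y₂ ≤ 1) :
    y₂ * f (1 / y₂) + (1 - y₂) * f 0 < y₁ * f (1 / y₁) + (1 - y₁) * f 0 := by
  have hy2 : 0 < y₂ := h0.trans h12
  have hne : (0 : ℝ) ≠ 1 / y₁ := by positivity
  have ha : 0 < 1 - y₁ / y₂ := by
    have : y₁ / y₂ < 1 := (div_lt_one hy2).mpr h12
    linarith
  have hb : 0 < y₁ / y₂ := by positivity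
  have key := hf.2 (Set.mem_Ici.mpr le_rfl)
    (Set.mem_Ici.mpr (by positivity : (0:ℝ) ≤ 1 / y₁)) hne ha hb (by ring)
  have hcomb : (1 - y₁ / y₂) • (0 : ℝ) + (y₁ / y₂) • (1 / y₁) = 1 / y₂ := by
    field_simp; simp only [smul_eq_mul, mul_zero, zero_add]; field_simp [h0.ne', hy2.ne']
  rw [hcomb] at key
  simp only [smul_eq_mul] at key
  have h := mul_lt_mul_of_pos_left key hy2
  have hy2ne : y₂ ≠ 0 := ne_of_gt hy2
  field_simp at h
  nlinarith [h]
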